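/- arXiv:2604.04248 — 3 statements merged into one kernel-verified Lean document; each statement's English description precedes it below -/
import Mathlib

section
/- Let (M₁,d₁,m₀) and (M₂,d₂,n₀) be pointed metric spaces and p ∈ [1,∞]. On the wedge sum M₁ ∨ M₂ (quotient of M₁ ⊔ M₂ identifying m₀ ∼ n₀), define d_{∨,p}(x,y) = d₁(x,y) if x,y ∈ M₁; d₂(x,y) if x,y ∈ M₂; and ‖(d₁(x,m₀), d₂(y,n₀))‖_{ℓ^p} for x ∈ M₁, y ∈ M₂. Then d_{∨,p} is a metric on M₁ ∨ M₂. -/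
open scoped ENNReal

/-- A function `d : X → X → ℝ` is a metric. -/
def IsMetric {X : Type*} (d : X → X → ℝ) : Prop :=
  (∀ x y, 0 ≤ d x y) ∧ (∀ x y, d x y = 0 ↔ x = y) ∧ (∀ x y, d x y = d y x) ∧
    (∀ x y z, d x z ≤ d x y + d y z)

/-- The `ℓ^p` norm of a pair of reals, `p ∈ [1,∞]`. -/
noncomputable def lpnorm (p : ℝ≥0∞) (a b : ℝ) : ℝ :=
  if p = ∞ then max |a| |b| else (|a| ^ p.toReal + |b| ^ p.toReal) ^ (1 / p.toReal)

/-- The setoid on `M₁ ⊕ M₂` identifying exactly the two basepoints `m₀ ∼ n₀`. -/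
def wedgeSetoid {M₁ M₂ : Type*} (m₀ : M₁) (n₀ : M₂) : Setoid (M₁ ⊕ M₂) where
  r a b := a = b ∨ (a = Sum.inl m₀ ∧ b = Sum.inr n₀) ∨ (a = Sum.inr n₀ ∧ b = Sum.inl m₀)
  iseqv := by
    constructor
    · intro a; exact Or.inl rfl
    · rintro a b (rfl | ⟨rfl, rfl⟩ | ⟨rfl, rfl⟩) <;> tauto
    · rintro a b c (rfl | ⟨rfl, rfl⟩ | ⟨rfl, rfl⟩) (h | ⟨h₁, h₂⟩ | ⟨h₁, h₂⟩) <;> simp_all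

/-- The wedge sum `M₁ ∨ M₂`: the quotient of `M₁ ⊔ M₂` identifying `m₀ ∼ n₀`. -/
def Wedge {M₁ M₂ : Type*} (m₀ : M₁) (n₀ : M₂) := Quotient (wedgeSetoid m₀ n₀)

section lemmas
variable {p : ℝ≥0∞} {a b a' b' c : ℝ}

lemma toReal_pos' (hp : 1 ≤ p) (h : p ≠ ∞) : 0 < p.toReal :=
  ENNReal.toReal_pos (by rintro rfl; simp at hp) h

lemma lpnorm_nonneg : 0 ≤ lpnorm p a b := by
  unfold lpnorm; split
  · exact le_max_of_le_left (abs_nonneg a)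
  · positivity

lemma lpnorm_zero_right (hp : 1 ≤ p) (a : ℝ) : lpnorm p a 0 = |a| := by
  unfold lpnorm; split
  · simp
  · rename_i h
    rw [abs_zero, Real.zero_rpow (toReal_pos' hp h).ne', add_zero, one_div,
      Real.rpow_rpow_inv (abs_nonneg a) (toReal_pos' hp h).ne']

lemma lpnorm_zero_left (hp : 1 ≤ p) (b : ℝ) : lpnorm p 0 b = |b| := by
  unfold lpnorm; split
  · simp
  · rename_i h
    rw [abs_zero, Real.zero_rpow (toReal_pos' hp h).ne', zero_add, one_div,
      Real.rpow_rpow_inv (abs_nonneg b) (toReal_pos' hp h).ne']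

lemma lpnorm_mono (hp : 1 ≤ p) (h1 : |a| ≤ |a'|) (h2 : |b| ≤ |b'|) :
    lpnorm p a b ≤ lpnorm p a' b' := by
  unfold lpnorm; split
  · exact max_le_max h1 h2
  · rename_i h
    have ht := toReal_pos' hp h
    exact Real.rpow_le_rpow (by positivity)
      (add_le_add (Real.rpow_le_rpow (abs_nonneg a) h1 ht.le)
        (Real.rpow_le_rpow (abs_nonneg b) h2 ht.le)) (by positivity)

lemma lpnorm_fst_le (hp : 1 ≤ p) : |a| ≤ lpnorm p a b := by
  calc |a| = lpnorm p a 0 := (lpnorm_zero_right hp a).symm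
  _ ≤ lpnorm p a b := lpnorm_mono hp le_rfl (by simp)

lemma lpnorm_snd_le (hp : 1 ≤ p) : |b| ≤ lpnorm p a b := by
  calc |b| = lpnorm p 0 b := (lpnorm_zero_left hp b).symm
  _ ≤ lpnorm p a b := lpnorm_mono hp (by simp) le_rfl

lemma lpnorm_eq_norm (hp : 1 ≤ p) (a b : ℝ) :
    lpnorm p a b = @norm (WithLp p (ℝ × ℝ))
      (haveI := Fact.mk hp; (inferInstance : Norm (WithLp p (ℝ × ℝ))))
      ((WithLp.equiv p (ℝ × ℝ)).symm (a, b)) := by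
  haveI := Fact.mk hp
  unfold lpnorm; split
  · rename_i h; subst h
    rw [WithLp.prod_norm_eq_sup]
    simp [Real.norm_eq_abs]
  · rename_i h
    rw [WithLp.prod_norm_eq_add (toReal_pos' hp h)]
    simp [Real.norm_eq_abs]

lemma lpnorm_triangle (hp : 1 ≤ p) (a b c d : ℝ) :
    lpnorm p (a + c) (b + d) ≤ lpnorm p a b + lpnorm p c d := by
  haveI := Fact.mk hp
  simp only [lpnorm_eq_norm hp]
  exact norm_add_le ((WithLp.equiv p (ℝ × ℝ)).symm (a, b)) ((WithLp.equiv p (ℝ × ℝ)).symm (c, d))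

lemma lpnorm_eq_zero (hp : 1 ≤ p) (ha : 0 ≤ a) (hb : 0 ≤ b) :
    lpnorm p a b = 0 ↔ a = 0 ∧ b = 0 := by
  constructor
  · intro h
    have h1 := lpnorm_fst_le (a := a) (b := b) hp
    have h2 := lpnorm_snd_le (a := a) (b := b) hp
    rw [h, abs_of_nonneg ha] at h1
    rw [h, abs_of_nonneg hb] at h2
    exact ⟨le_antisymm h1 ha, le_antisymm h2 hb⟩
  · rintro ⟨rfl, rfl⟩
    rw [lpnorm_zero_right hp, abs_zero]

lemma lpnorm_add_fst (hp : 1 ≤ p) (hc : 0 ≤ c) (ha : 0 ≤ a) (ha' : 0 ≤ a')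
    (h : a' ≤ c + a) : lpnorm p a' b ≤ c + lpnorm p a b := by
  calc lpnorm p a' b ≤ lpnorm p (c + a) (0 + b) :=
        lpnorm_mono hp (by rw [abs_of_nonneg ha', abs_of_nonneg (by positivity)]; exact h)
          (by simp)
  _ ≤ lpnorm p c 0 + lpnorm p a b := lpnorm_triangle hp c 0 a b
  _ = c + lpnorm p a b := by rw [lpnorm_zero_right hp, abs_of_nonneg hc]

lemma lpnorm_add_snd (hp : 1 ≤ p) (hc : 0 ≤ c) (hb : 0 ≤ b) (hb' : 0 ≤ b')
    (h : b' ≤ c + b) : lpnorm p a b' ≤ c + lpnorm p a b := by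
  calc lpnorm p a b' ≤ lpnorm p (0 + a) (c + b) :=
        lpnorm_mono hp (by simp)
          (by rw [abs_of_nonneg hb', abs_of_nonneg (by positivity)]; exact h)
  _ ≤ lpnorm p 0 c + lpnorm p a b := lpnorm_triangle hp 0 c a b
  _ = c + lpnorm p a b := by rw [lpnorm_zero_left hp, abs_of_nonneg hc]

end lemmas

/-- on the wedge `M₁ ∨ M₂` there is a well-defined function `D` given by
`d₁` on `M₁`, `d₂` on `M₂`, and `‖(d₁(x,m₀), d₂(y,n₀))‖_{ℓ^p}` on cross pairs,
and this `D` is a metric. -/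
theorem wedge_lp_isMetric {M₁ M₂ : Type*} (d₁ : M₁ → M₁ → ℝ) (d₂ : M₂ → M₂ → ℝ)
    (hd₁ : IsMetric d₁) (hd₂ : IsMetric d₂) (m₀ : M₁) (n₀ : M₂)
    (p : ℝ≥0∞) (hp : 1 ≤ p) :
    ∃ D : Wedge m₀ n₀ → Wedge m₀ n₀ → ℝ,
      (∀ a b : M₁, D (Quotient.mk (wedgeSetoid m₀ n₀) (Sum.inl a))
          (Quotient.mk (wedgeSetoid m₀ n₀) (Sum.inl b)) = d₁ a b) ∧
      (∀ a b : M₂, D (Quotient.mk (wedgeSetoid m₀ n₀) (Sum.inr a))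
          (Quotient.mk (wedgeSetoid m₀ n₀) (Sum.inr b)) = d₂ a b) ∧
      (∀ (a : M₁) (b : M₂), D (Quotient.mk (wedgeSetoid m₀ n₀) (Sum.inl a))
          (Quotient.mk (wedgeSetoid m₀ n₀) (Sum.inr b)) = lpnorm p (d₁ a m₀) (d₂ b n₀)) ∧
      (∀ (a : M₁) (b : M₂), D (Quotient.mk (wedgeSetoid m₀ n₀) (Sum.inr b))
          (Quotient.mk (wedgeSetoid m₀ n₀) (Sum.inl a)) = lpnorm p (d₁ a m₀) (d₂ b n₀)) ∧
      IsMetric D := by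
  
  obtain ⟨h1n, h1z, h1s, h1t⟩ := hd₁
  obtain ⟨h2n, h2z, h2s, h2t⟩ := hd₂
  set f : M₁ ⊕ M₂ → M₁ ⊕ M₂ → ℝ := fun x y =>
    match x, y with
    | .inl a, .inl b => d₁ a b
    | .inr a, .inr b => d₂ a b
    | .inl a, .inr b => lpnorm p (d₁ a m₀) (d₂ b n₀)
    | .inr a, .inl b => lpnorm p (d₁ b m₀) (d₂ a n₀)
    with hf
  have key1 : ∀ y, f (Sum.inl m₀) y = f (Sum.inr n₀) y := by
    rintro (b | b) <;> simp only [hf]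
    · rw [(h2z n₀ n₀).mpr rfl, lpnorm_zero_right hp, abs_of_nonneg (h1n _ _), h1s]
    · rw [(h1z m₀ m₀).mpr rfl, lpnorm_zero_left hp, abs_of_nonneg (h2n _ _), h2s]
  have key2 : ∀ x, f x (Sum.inl m₀) = f x (Sum.inr n₀) := by
    rintro (a | a) <;> simp only [hf]
    · rw [(h2z n₀ n₀).mpr rfl, lpnorm_zero_right hp, abs_of_nonneg (h1n _ _)]
    · rw [(h1z m₀ m₀).mpr rfl, lpnorm_zero_left hp, abs_of_nonneg (h2n _ _), h2s]
  have hresp : ∀ a₁ b₁ a₂ b₂ : M₁ ⊕ M₂, (wedgeSetoid m₀ n₀).r a₁ a₂ →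
      (wedgeSetoid m₀ n₀).r b₁ b₂ → f a₁ b₁ = f a₂ b₂ := by
    intro a₁ b₁ a₂ b₂ h h'
    have e1 : f a₁ b₁ = f a₂ b₁ := by
      rcases h with rfl | ⟨rfl, rfl⟩ | ⟨rfl, rfl⟩
      · rfl
      · exact key1 b₁
      · exact (key1 b₁).symm
    have e2 : f a₂ b₁ = f a₂ b₂ := by
      rcases h' with rfl | ⟨rfl, rfl⟩ | ⟨rfl, rfl⟩
      · rfl
      · exact key2 a₂
      · exact (key2 a₂).symm
    exact e1.trans e2
  refine ⟨Quotient.lift₂ f hresp, fun a b => rfl, fun a b => rfl, fun a b => rfl,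
    fun a b => rfl, ?_, ?_, ?_, ?_⟩
  · intro x y
    obtain ⟨x⟩ := x; obtain ⟨y⟩ := y
    rcases x with a | a <;> rcases y with b | b
    · exact h1n a b
    · exact lpnorm_nonneg
    · exact lpnorm_nonneg
    · exact h2n a b
  · intro x y
    obtain ⟨x⟩ := x; obtain ⟨y⟩ := y
    rcases x with a | a <;> rcases y with b | b
    · show d₁ a b = 0 ↔ _
      rw [h1z]
      constructor
      · rintro rfl; rfl
      · intro h
        rcases Quotient.exact h with h' | ⟨h₁, h₂⟩ | ⟨h₁, h₂⟩
        · exact Sum.inl.inj h'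
        · exact nomatch h₂
        · exact nomatch h₁
    · show lpnorm p (d₁ a m₀) (d₂ b n₀) = 0 ↔ _
      rw [lpnorm_eq_zero hp (h1n _ _) (h2n _ _), h1z, h2z]
      constructor
      · rintro ⟨rfl, rfl⟩; exact Quotient.sound (Or.inr (Or.inl ⟨rfl, rfl⟩))
      · intro h
        rcases Quotient.exact h with h' | ⟨h₁, h₂⟩ | ⟨h₁, h₂⟩
        · exact nomatch h'
        · exact ⟨Sum.inl.inj h₁, Sum.inr.inj h₂⟩
        · exact nomatch h₁
    · show lpnorm p (d₁ b m₀) (d₂ a n₀) = 0 ↔ _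
      rw [lpnorm_eq_zero hp (h1n _ _) (h2n _ _), h1z, h2z]
      constructor
      · rintro ⟨rfl, rfl⟩; exact Quotient.sound (Or.inr (Or.inr ⟨rfl, rfl⟩))
      · intro h
        rcases Quotient.exact h with h' | ⟨h₁, h₂⟩ | ⟨h₁, h₂⟩
        · exact nomatch h'
        · exact nomatch h₁
        · exact ⟨Sum.inl.inj h₂, Sum.inr.inj h₁⟩
    · show d₂ a b = 0 ↔ _
      rw [h2z]
      constructor
      · rintro rfl; rfl
      · intro h
        rcases Quotient.exact h with h' | ⟨h₁, h₂⟩ | ⟨h₁, h₂⟩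
        · exact Sum.inr.inj h'
        · exact nomatch h₁
        · exact nomatch h₂
  · intro x y
    obtain ⟨x⟩ := x; obtain ⟨y⟩ := y
    rcases x with a | a <;> rcases y with b | b
    · exact h1s a b
    · rfl
    · rfl
    · exact h2s a b
  · intro x y z
    obtain ⟨x⟩ := x; obtain ⟨y⟩ := y; obtain ⟨z⟩ := z
    rcases x with a | a <;> rcases y with b | b <;> rcases z with c | c
    · exact h1t a b c
    · -- LLR
      show lpnorm p (d₁ a m₀) (d₂ c n₀) ≤ d₁ a b + lpnorm p (d₁ b m₀) (d₂ c n₀)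
      exact lpnorm_add_fst hp (h1n _ _) (h1n _ _) (h1n _ _) (h1t a b m₀)
    · -- LRL
      show d₁ a c ≤ lpnorm p (d₁ a m₀) (d₂ b n₀) + lpnorm p (d₁ c m₀) (d₂ b n₀)
      have k1 := lpnorm_fst_le (a := d₁ a m₀) (b := d₂ b n₀) hp
      have k2 := lpnorm_fst_le (a := d₁ c m₀) (b := d₂ b n₀) hp
      rw [abs_of_nonneg (h1n _ _)] at k1 k2
      have := h1t a m₀ c
      rw [h1s m₀ c] at this
      linarith
    · -- LRR
      show lpnorm p (d₁ a m₀) (d₂ c n₀) ≤ lpnorm p (d₁ a m₀) (d₂ b n₀) + d₂ b c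
      rw [add_comm]
      refine lpnorm_add_snd hp (h2n _ _) (h2n _ _) (h2n _ _) ?_
      have := h2t c b n₀
      rw [h2s c b] at this
      linarith
    · -- RLL
      show lpnorm p (d₁ c m₀) (d₂ a n₀) ≤ lpnorm p (d₁ b m₀) (d₂ a n₀) + d₁ b c
      rw [add_comm]
      refine lpnorm_add_fst hp (h1n _ _) (h1n _ _) (h1n _ _) ?_
      have := h1t c b m₀
      rw [h1s c b] at this
      linarith
    · -- RLR
      show d₂ a c ≤ lpnorm p (d₁ b m₀) (d₂ a n₀) + lpnorm p (d₁ b m₀) (d₂ c n₀)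
      have k1 := lpnorm_snd_le (a := d₁ b m₀) (b := d₂ a n₀) hp
      have k2 := lpnorm_snd_le (a := d₁ b m₀) (b := d₂ c n₀) hp
      rw [abs_of_nonneg (h2n _ _)] at k1 k2
      have := h2t a n₀ c
      rw [h2s n₀ c] at this
      linarith
    · -- RRL
      show lpnorm p (d₁ c m₀) (d₂ a n₀) ≤ d₂ a b + lpnorm p (d₁ c m₀) (d₂ b n₀)
      exact lpnorm_add_snd hp (h2n _ _) (h2n _ _) (h2n _ _) (h2t a b n₀)
    · exact h2t a b c
end

section
/- Let (M₁,d₁,m₀), (M₂,d₂,n₀) be pointed metric spaces, p ∈ [1,∞], t ≥ 0, and let σ ⊆ M₁ and τ ⊆ M₂ \ {n₀} be finite nonempty sets. Set A = max_{x∈σ} d₁(x,m₀) and B = max_{y∈τ} d₂(y,n₀). Then all pairwise d_{∨,p}-distances within σ ∪ τ are ≤ t if and only if: (1) all pairwise d₁-distances in σ are ≤ t, (2) all pairwise d₂-distances in τ are ≤ t, and (3) ‖(A,B)‖_{ℓ^p} ≤ t. -/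
open scoped ENNReal

/-- The `ℓ^p`-wedge distance on the disjoint union `M₁ ⊕ M₂` (basepoints `m₀, n₀`):
`d₁` on `M₁`, `d₂` on `M₂`, cross distances `‖(d₁(x,m₀), d₂(y,n₀))‖_{ℓ^p}`.
Passing to the quotient identifying `m₀ ∼ n₀` gives the wedge metric `d_{∨,p}`. -/
noncomputable def dWedge {M₁ M₂ : Type*} (d₁ : M₁ → M₁ → ℝ) (d₂ : M₂ → M₂ → ℝ)
    (m₀ : M₁) (n₀ : M₂) (p : ℝ≥0∞) : M₁ ⊕ M₂ → M₁ ⊕ M₂ → ℝ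
  | Sum.inl a, Sum.inl b => d₁ a b
  | Sum.inr a, Sum.inr b => d₂ a b
  | Sum.inl a, Sum.inr b => lpnorm p (d₁ a m₀) (d₂ b n₀)
  | Sum.inr a, Sum.inl b => lpnorm p (d₁ b m₀) (d₂ a n₀)

/-! The cross distances of `σ ∪ τ` are `‖(d₁(x,m₀), d₂(y,n₀))‖_p`. Since the `ℓ^p` norm is monotone
in each nonnegative coordinate, their maximum over `σ × τ` is `‖(A,B)‖_p`, attained at a pair of
maximisers. -/

lemma lpnorm_le_lpnorm (p : ℝ≥0∞) {a b a' b' : ℝ} (ha : |a| ≤ |a'|) (hb : |b| ≤ |b'|) :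
    lpnorm p a b ≤ lpnorm p a' b' := by
  unfold lpnorm
  split_ifs
  · exact max_le_max ha hb
  · have hp : 0 ≤ p.toReal := ENNReal.toReal_nonneg
    gcongr

lemma lpnorm_le_lpnorm_of_nonneg (p : ℝ≥0∞) {a b a' b' : ℝ} (ha₀ : 0 ≤ a) (hb₀ : 0 ≤ b)
    (ha : a ≤ a') (hb : b ≤ b') : lpnorm p a b ≤ lpnorm p a' b' :=
  lpnorm_le_lpnorm p (abs_le_abs_of_nonneg ha₀ ha) (abs_le_abs_of_nonneg hb₀ hb)

lemma forall_lpnorm_le_iff_lpnorm_sup'_le {α β : Type*} (p : ℝ≥0∞) {s : Finset α}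
    {u : Finset β} (hs : s.Nonempty) (hu : u.Nonempty) {f : α → ℝ} {g : β → ℝ}
    (hf : ∀ x ∈ s, 0 ≤ f x) (hg : ∀ y ∈ u, 0 ≤ g y) (t : ℝ) :
    (∀ x ∈ s, ∀ y ∈ u, lpnorm p (f x) (g y) ≤ t) ↔ lpnorm p (s.sup' hs f) (u.sup' hu g) ≤ t := by
  constructor
  · intro h
    obtain ⟨x, hx, hfx⟩ := s.exists_mem_eq_sup' hs f
    obtain ⟨y, hy, hgy⟩ := u.exists_mem_eq_sup' hu g
    rw [hfx, hgy]
    exact h x hx y hy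
  · intro h x hx y hy
    exact (lpnorm_le_lpnorm_of_nonneg p (hf x hx) (hg y hy) (s.le_sup' f hx)
      (u.le_sup' g hy)).trans h

lemma Finset.forall_mem_image_inl_union_image_inr {α β : Type*} [DecidableEq α] [DecidableEq β]
    (s : Finset α) (u : Finset β) (P : α ⊕ β → Prop) :
    (∀ z ∈ s.image Sum.inl ∪ u.image Sum.inr, P z) ↔
      (∀ x ∈ s, P (Sum.inl x)) ∧ ∀ y ∈ u, P (Sum.inr y) := by
  simp only [Finset.forall_mem_union, Finset.forall_mem_image]

theorem wedge_rips_mixed_simplex_general {M₁ M₂ : Type*} [DecidableEq M₁] [DecidableEq M₂]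
    (d₁ : M₁ → M₁ → ℝ) (d₂ : M₂ → M₂ → ℝ)
    (hd₁ : IsMetric d₁) (hd₂ : IsMetric d₂) (m₀ : M₁) (n₀ : M₂)
    (p : ℝ≥0∞) (t : ℝ)
    (σ : Finset M₁) (τ : Finset M₂) (hσ : σ.Nonempty) (hτ : τ.Nonempty) :
    ((∀ u ∈ σ.image Sum.inl ∪ τ.image (Sum.inr : M₂ → M₁ ⊕ M₂),
        ∀ v ∈ σ.image Sum.inl ∪ τ.image (Sum.inr : M₂ → M₁ ⊕ M₂),
          dWedge d₁ d₂ m₀ n₀ p u v ≤ t)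
      ↔ ((∀ x ∈ σ, ∀ x' ∈ σ, d₁ x x' ≤ t) ∧ (∀ y ∈ τ, ∀ y' ∈ τ, d₂ y y' ≤ t) ∧
          lpnorm p (σ.sup' hσ fun x => d₁ x m₀) (τ.sup' hτ fun y => d₂ y n₀) ≤ t)) := by
  rw [← forall_lpnorm_le_iff_lpnorm_sup'_le p hσ hτ (fun x _ => hd₁.1 x m₀)
    (fun y _ => hd₂.1 y n₀)]
  simp only [Finset.forall_mem_image_inl_union_image_inr, dWedge, imp_and, forall_and]
  have hcross_comm : (∀ y ∈ τ, ∀ x ∈ σ, lpnorm p (d₁ x m₀) (d₂ y n₀) ≤ t) ↔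
      ∀ x ∈ σ, ∀ y ∈ τ, lpnorm p (d₁ x m₀) (d₂ y n₀) ≤ t :=
    ⟨fun h x hx y hy => h y hy x hx, fun h y hy x hx => h x hx y hy⟩
  rw [hcross_comm]
  tauto

/-- mixed Rips simplices in the `ℓ^p`-wedge. For finite nonempty
`σ ⊆ M₁` and `τ ⊆ M₂ \ {n₀}`, with `A = max_{x∈σ} d₁(x,m₀)`, `B = max_{y∈τ} d₂(y,n₀)`,
all pairwise wedge distances within `σ ∪ τ` are `≤ t` iff all pairwise `d₁`-distances in
`σ` are `≤ t`, all pairwise `d₂`-distances in `τ` are `≤ t`, and `‖(A,B)‖_{ℓ^p} ≤ t`. -/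
theorem wedge_rips_mixed_simplex {M₁ M₂ : Type*} [DecidableEq M₁] [DecidableEq M₂]
    (d₁ : M₁ → M₁ → ℝ) (d₂ : M₂ → M₂ → ℝ)
    (hd₁ : IsMetric d₁) (hd₂ : IsMetric d₂) (m₀ : M₁) (n₀ : M₂)
    (p : ℝ≥0∞) (hp : 1 ≤ p) (t : ℝ) (ht : 0 ≤ t)
    (σ : Finset M₁) (τ : Finset M₂) (hσ : σ.Nonempty) (hτ : τ.Nonempty)
    (hτn : ∀ y ∈ τ, y ≠ n₀) :
    ((∀ u ∈ σ.image Sum.inl ∪ τ.image (Sum.inr : M₂ → M₁ ⊕ M₂),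
        ∀ v ∈ σ.image Sum.inl ∪ τ.image (Sum.inr : M₂ → M₁ ⊕ M₂),
          dWedge d₁ d₂ m₀ n₀ p u v ≤ t)
      ↔ ((∀ x ∈ σ, ∀ x' ∈ σ, d₁ x x' ≤ t) ∧ (∀ y ∈ τ, ∀ y' ∈ τ, d₂ y y' ≤ t) ∧
          lpnorm p (σ.sup' hσ fun x => d₁ x m₀) (τ.sup' hτ fun y => d₂ y n₀) ≤ t)) :=
  wedge_rips_mixed_simplex_general d₁ d₂ hd₁ hd₂ m₀ n₀ p t σ τ hσ hτ
end

section
/- Let (M₁,d₁,m₀), (M₂,d₂,n₀) be pointed metric spaces with wedge metric d = d_{∨,∞} (p = ∞ glue). Let S be a finite subset of the wedge, t ≥ 0, and suppose: S ∩ M₁ = {x₁,x₂} with d₁(x₁,x₂) > t and d₁(x_i, m₀) ≤ t; S ∩ (M₂ \ {n₀}) = {y₁,y₂} with d₂(y₁,y₂) > t and d₂(y_j, n₀) ≤ t; and m₀ ∉ S. Then the Vietoris–Rips complex of S at scale t has 1-skeleton equal to the complete bipartite graph K_{2,2} (the four mixed pairs are edges, the two within-side pairs are not) and contains no 2-simplices;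 hence it is a 4-cycle. -/
open scoped ENNReal

/-! In the `ℓ^∞` wedge a cross distance is the larger of the two radii to the basepoints, so
every mixed pair is an edge, while the two within-side pairs are not. Any three of the four
points contain two from the same side, hence a non-edge, so there is no 2-simplex. -/

theorem lpnorm_top (a b : ℝ) : lpnorm ∞ a b = max |a| |b| := if_pos rfl

section Wedge

variable {M₁ M₂ : Type*} {d₁ : M₁ → M₁ → ℝ} {d₂ : M₂ → M₂ → ℝ} {m₀ : M₁} {n₀ : M₂}

theorem dWedge_comm (h₁ : ∀ x y, d₁ x y = d₁ y x) (h₂ : ∀ x y, d₂ x y = d₂ y x) (p : ℝ≥0∞)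
    (u v : M₁ ⊕ M₂) : dWedge d₁ d₂ m₀ n₀ p u v = dWedge d₁ d₂ m₀ n₀ p v u := by
  cases u <;> cases v <;> simp only [dWedge, h₁, h₂]

theorem dWedge_top_inl_inr (h₁ : ∀ x y, 0 ≤ d₁ x y) (h₂ : ∀ x y, 0 ≤ d₂ x y) (a : M₁) (b : M₂) :
    dWedge d₁ d₂ m₀ n₀ ∞ (Sum.inl a) (Sum.inr b) = max (d₁ a m₀) (d₂ b n₀) := by
  rw [dWedge, lpnorm_top, abs_of_nonneg (h₁ a m₀), abs_of_nonneg (h₂ b n₀)]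

end Wedge

theorem not_triangle_of_not_adj {α : Type*} {adj : α → α → Prop} (hsymm : Std.Symm adj)
    {a₁ a₂ b₁ b₂ u v w : α} (ha : ¬ adj a₁ a₂) (hb : ¬ adj b₁ b₂)
    (hu : u ∈ ({a₁, a₂, b₁, b₂} : Set α)) (hv : v ∈ ({a₁, a₂, b₁, b₂} : Set α))
    (hw : w ∈ ({a₁, a₂, b₁, b₂} : Set α)) (huv : u ≠ v) (huw : u ≠ w) (hvw : v ≠ w) :
    ¬ (adj u v ∧ adj u w ∧ adj v w) := by
  have ha' : ¬ adj a₂ a₁ := fun h => ha (hsymm.symm _ _ h)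
  have hb' : ¬ adj b₂ b₁ := fun h => hb (hsymm.symm _ _ h)
  simp only [Set.mem_insert_iff, Set.mem_singleton_iff] at hu hv hw
  rcases hu with rfl | rfl | rfl | rfl <;> rcases hv with rfl | rfl | rfl | rfl <;>
    rcases hw with rfl | rfl | rfl | rfl <;> tauto

theorem wedge_rips_K22_general {M₁ M₂ : Type*} (d₁ : M₁ → M₁ → ℝ) (d₂ : M₂ → M₂ → ℝ)
    (hd₁ : IsMetric d₁) (hd₂ : IsMetric d₂) (m₀ : M₁) (n₀ : M₂)
    (t : ℝ) (x₁ x₂ : M₁) (y₁ y₂ : M₂)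
    (hx12 : t < d₁ x₁ x₂) (hx1r : d₁ x₁ m₀ ≤ t) (hx2r : d₁ x₂ m₀ ≤ t)
    (hy12 : t < d₂ y₁ y₂) (hy1r : d₂ y₁ n₀ ≤ t) (hy2r : d₂ y₂ n₀ ≤ t) :
    (dWedge d₁ d₂ m₀ n₀ ∞ (Sum.inl x₁) (Sum.inr y₁) ≤ t ∧
     dWedge d₁ d₂ m₀ n₀ ∞ (Sum.inl x₁) (Sum.inr y₂) ≤ t ∧
     dWedge d₁ d₂ m₀ n₀ ∞ (Sum.inl x₂) (Sum.inr y₁) ≤ t ∧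
     dWedge d₁ d₂ m₀ n₀ ∞ (Sum.inl x₂) (Sum.inr y₂) ≤ t) ∧
    ¬ dWedge d₁ d₂ m₀ n₀ ∞ (Sum.inl x₁) (Sum.inl x₂) ≤ t ∧
    ¬ dWedge d₁ d₂ m₀ n₀ ∞ (Sum.inr y₁) (Sum.inr y₂) ≤ t ∧
    (∀ u v w : M₁ ⊕ M₂,
      u ∈ ({Sum.inl x₁, Sum.inl x₂, Sum.inr y₁, Sum.inr y₂} : Set (M₁ ⊕ M₂)) →
      v ∈ ({Sum.inl x₁, Sum.inl x₂, Sum.inr y₁, Sum.inr y₂} : Set (M₁ ⊕ M₂)) →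
      w ∈ ({Sum.inl x₁, Sum.inl x₂, Sum.inr y₁, Sum.inr y₂} : Set (M₁ ⊕ M₂)) →
      u ≠ v → u ≠ w → v ≠ w →
      ¬ (dWedge d₁ d₂ m₀ n₀ ∞ u v ≤ t ∧ dWedge d₁ d₂ m₀ n₀ ∞ u w ≤ t ∧
          dWedge d₁ d₂ m₀ n₀ ∞ v w ≤ t)) := by
  obtain ⟨h₁nonneg, -, h₁symm, -⟩ := hd₁
  obtain ⟨h₂nonneg, -, h₂symm, -⟩ := hd₂
  have edge {a : M₁} {b : M₂} (ha : d₁ a m₀ ≤ t) (hb : d₂ b n₀ ≤ t) :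
      dWedge d₁ d₂ m₀ n₀ ∞ (Sum.inl a) (Sum.inr b) ≤ t :=
    (dWedge_top_inl_inr h₁nonneg h₂nonneg a b).trans_le (max_le ha hb)
  have hx_not_adj : ¬ dWedge d₁ d₂ m₀ n₀ ∞ (Sum.inl x₁) (Sum.inl x₂) ≤ t := hx12.not_ge
  have hy_not_adj : ¬ dWedge d₁ d₂ m₀ n₀ ∞ (Sum.inr y₁) (Sum.inr y₂) ≤ t := hy12.not_ge
  have hsymm : Std.Symm fun u v => dWedge d₁ d₂ m₀ n₀ ∞ u v ≤ t :=
    ⟨fun u v h => (dWedge_comm h₁symm h₂symm ∞ v u).trans_le h⟩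
  exact ⟨⟨edge hx1r hy1r, edge hx1r hy2r, edge hx2r hy1r, edge hx2r hy2r⟩, hx_not_adj, hy_not_adj,
    fun u v w => not_triangle_of_not_adj hsymm hx_not_adj hy_not_adj⟩

/-- in the `p = ∞` wedge, a cloud `{x₁,x₂} ⊆ M₁`, `{y₁,y₂} ⊆ M₂ \ {n₀}`
(with `m₀` not in the cloud) whose within-side distances exceed `t` and whose radii to the
basepoints are `≤ t` has Rips 1-skeleton at scale `t` equal to `K_{2,2}`: all four mixed
pairs are edges, neither within-side pair is an edge, and there is no 2-simplex. -/
theorem wedge_rips_K22 {M₁ M₂ : Type*} (d₁ : M₁ → M₁ → ℝ) (d₂ : M₂ → M₂ → ℝ)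
    (hd₁ : IsMetric d₁) (hd₂ : IsMetric d₂) (m₀ : M₁) (n₀ : M₂)
    (t : ℝ) (ht : 0 ≤ t) (x₁ x₂ : M₁) (y₁ y₂ : M₂)
    (hx12 : t < d₁ x₁ x₂) (hx1r : d₁ x₁ m₀ ≤ t) (hx2r : d₁ x₂ m₀ ≤ t)
    (hy12 : t < d₂ y₁ y₂) (hy1r : d₂ y₁ n₀ ≤ t) (hy2r : d₂ y₂ n₀ ≤ t)
    (hx1m : x₁ ≠ m₀) (hx2m : x₂ ≠ m₀) (hy1n : y₁ ≠ n₀) (hy2n : y₂ ≠ n₀) :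
    (dWedge d₁ d₂ m₀ n₀ ∞ (Sum.inl x₁) (Sum.inr y₁) ≤ t ∧
     dWedge d₁ d₂ m₀ n₀ ∞ (Sum.inl x₁) (Sum.inr y₂) ≤ t ∧
     dWedge d₁ d₂ m₀ n₀ ∞ (Sum.inl x₂) (Sum.inr y₁) ≤ t ∧
     dWedge d₁ d₂ m₀ n₀ ∞ (Sum.inl x₂) (Sum.inr y₂) ≤ t) ∧
    ¬ dWedge d₁ d₂ m₀ n₀ ∞ (Sum.inl x₁) (Sum.inl x₂) ≤ t ∧
    ¬ dWedge d₁ d₂ m₀ n₀ ∞ (Sum.inr y₁) (Sum.inr y₂) ≤ t ∧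
    (∀ u v w : M₁ ⊕ M₂,
      u ∈ ({Sum.inl x₁, Sum.inl x₂, Sum.inr y₁, Sum.inr y₂} : Set (M₁ ⊕ M₂)) →
      v ∈ ({Sum.inl x₁, Sum.inl x₂, Sum.inr y₁, Sum.inr y₂} : Set (M₁ ⊕ M₂)) →
      w ∈ ({Sum.inl x₁, Sum.inl x₂, Sum.inr y₁, Sum.inr y₂} : Set (M₁ ⊕ M₂)) →
      u ≠ v → u ≠ w → v ≠ w →
      ¬ (dWedge d₁ d₂ m₀ n₀ ∞ u v ≤ t ∧ dWedge d₁ d₂ m₀ n₀ ∞ u w ≤ t ∧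
          dWedge d₁ d₂ m₀ n₀ ∞ v w ≤ t)) :=
  wedge_rips_K22_general d₁ d₂ hd₁ hd₂ m₀ n₀ t x₁ x₂ y₁ y₂ hx12 hx1r hx2r hy12 hy1r hy2r
end
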